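/- In a mass-independent scheme where γ_a^h = Σ_b γ_a^{h,b}(g) ĥ_b with ĥ_a = Σ_{b=1}^P f_a^b(g) h_b for a = P+1,...,L, the consistency equation β_g ∂ĥ_a/∂g + Σ_{b=1}^P γ_b^h ∂ĥ_a/∂h_b = γ_a^h holds for all values of h_1,...,h_P if and only if the functions f_a^b satisfy β_g df_a^b/dg + Σ_c f_a^c [γ_c^{h,b} + Σ_{d>P} γ_c^{h,d} f_d^b] − γ_a^{h,b} − Σ_{d>P} γ_a^{h,d} f_d^b = 0 for each a = P+1,...,L and b = 1,...,P. -/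

import Mathlib

open Finset

lemma sum_split' {L P : ℕ} (hP : P ≤ L) (F : Fin L → ℝ) :
    ∑ d : Fin L, F d = (∑ b : Fin P, F (Fin.castLE hP b)) + ∑ d : Fin L, (if P ≤ (d:ℕ) then F d else 0) := by
  classical
  set G : ℕ → ℝ := fun i => if h : i < L then (if i < P then F ⟨i, h⟩ else 0) else 0 with hG
  have e1 : ∑ d : Fin L, (if (d:ℕ) < P then F d else 0) = ∑ i ∈ range L, G i := by
    rw [← Fin.sum_univ_eq_sum_range]
    exact Finset.sum_congr rfl fun d _ => by simp [G, d.isLt]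
  have e2 : ∑ b : Fin P, F (Fin.castLE hP b) = ∑ i ∈ range P, G i := by
    rw [← Fin.sum_univ_eq_sum_range]
    refine Finset.sum_congr rfl fun b _ => ?_
    have hb : (b:ℕ) < L := lt_of_lt_of_le b.isLt hP
    simp [G, hb, b.isLt]
    rfl
  have e3 : ∑ i ∈ range P, G i = ∑ i ∈ range L, G i := by
    refine Finset.sum_subset (Finset.range_subset_range.mpr hP) fun x hx hx' => ?_
    simp only [Finset.mem_range, not_lt] at hx hx'
    simp [G, hx']
  rw [e2, e3, ← e1, ← Finset.sum_add_distrib]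
  refine Finset.sum_congr rfl fun d _ => ?_
  by_cases hd : (d:ℕ) < P
  · simp [hd, Nat.not_le.mpr hd]
  · simp [hd, Nat.not_lt.mp hd]

lemma deriv_lin' {P : ℕ} (f : Fin P → ℝ → ℝ) (hf : ∀ b, Differentiable ℝ (f b)) (h : Fin P → ℝ) (g : ℝ) :
    deriv (fun t => ∑ b : Fin P, f b t * h b) g = ∑ b : Fin P, deriv (f b) g * h b := by
  rw [deriv_fun_sum (fun b _ => ((hf b).differentiableAt).mul_const (h b))]
  exact Finset.sum_congr rfl fun b _ => deriv_mul_const (hf b).differentiableAt (h b)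

lemma deriv_upd' {P : ℕ} (c : Fin P → ℝ) (h : Fin P → ℝ) (b : Fin P) :
    deriv (fun s => ∑ e : Fin P, c e * Function.update h b s e) (h b) = c b := by
  have H : HasDerivAt (fun s => ∑ e : Fin P, c e * Function.update h b s e)
      (∑ e : Fin P, if e = b then c e else 0) (h b) := by
    apply HasDerivAt.fun_sum
    intro e _
    by_cases he : e = b
    · subst he
      simp only [if_pos rfl]
      have : (fun s => c e * Function.update h e s e) = fun s => c e * s := by
        funext s; rw [Function.update_self]
      rw [this]
      simpa using (hasDerivAt_id (h e)).const_mul (c e)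
    · simp only [if_neg he]
      have : (fun s => c e * Function.update h b s e) = fun _ => c e * h e := by
        funext s; rw [Function.update_of_ne he]
      rw [this]
      exact hasDerivAt_const _ _
  rw [H.deriv, Finset.sum_ite_eq' univ b c]
  simp

/-- In a mass-independent scheme with `γ_a^h = Σ_b γ_a^{h,b}(g) ĥ_b` and
`ĥ_a = Σ_{b≤P} f_a^b(g) h_b` for the reduced indices `a`, the consistency
equation for the dimension-one parameters holds for all values of the
independent `h`'s iff the `f_a^b` satisfy the reduction ODE system. -/
theorem stmt_4 (L P : ℕ) (hP : P ≤ L)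
    (βg : ℝ → ℝ)                             -- β_g(g)
    (γhb : Fin L → Fin L → ℝ → ℝ)            -- γ_a^{h,b}(g)
    (f : Fin L → Fin P → ℝ → ℝ)              -- f_a^b(g)
    (hf : ∀ a b, Differentiable ℝ (f a b))
    -- reduced parameters: ĥ_a = h_a for a ≤ P, ĥ_a = Σ_b f_a^b h_b otherwise
    (hhat : (Fin L → (ℝ → (Fin P → ℝ) → ℝ)))
    (hhat_indep : ∀ (b : Fin P) (g : ℝ) (h : Fin P → ℝ),
      hhat (Fin.castLE hP b) g h = h b)
    (hhat_red : ∀ (a : Fin L), P ≤ (a : ℕ) → ∀ (g : ℝ) (h : Fin P → ℝ),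
      hhat a g h = ∑ b : Fin P, f a b g * h b)
    -- γ_a^h evaluated on the reduced parameters
    (γ : Fin L → ℝ → (Fin P → ℝ) → ℝ)
    (hγ : ∀ a g h, γ a g h = ∑ b : Fin L, γhb a b g * hhat b g h) :
    -- the consistency equation, for all h,  iff  the ODE system for f
    ((∀ (a : Fin L), P ≤ (a : ℕ) → ∀ (g : ℝ) (h : Fin P → ℝ),
        βg g * deriv (fun t => hhat a t h) g
        + ∑ b : Fin P, γ (Fin.castLE hP b) g h
            * deriv (fun s => hhat a g (Function.update h b s)) (h b)
        = γ a g h)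
    ↔ (∀ (a : Fin L), P ≤ (a : ℕ) → ∀ (b : Fin P) (g : ℝ),
        βg g * deriv (f a b) g
        + ∑ c : Fin P, f a c g *
            (γhb (Fin.castLE hP c) (Fin.castLE hP b) g
              + ∑ d : Fin L, (if P ≤ (d : ℕ)
                  then γhb (Fin.castLE hP c) d g * f d b g else 0))
        - γhb a (Fin.castLE hP b) g
        - ∑ d : Fin L, (if P ≤ (d : ℕ) then γhb a d g * f d b g else 0)
        = 0)) := by
  classical
  set coef : Fin L → Fin P → ℝ → ℝ := fun x b g =>
    γhb x (Fin.castLE hP b) g + ∑ d : Fin L, (if P ≤ (d:ℕ) then γhb x d g * f d b g else 0)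
    with hcoef
  -- expansion of γ as linear function of h
  have γexp : ∀ (x : Fin L) (g : ℝ) (h : Fin P → ℝ),
      γ x g h = ∑ b : Fin P, coef x b g * h b := by
    intro x g h
    rw [hγ, sum_split' hP (fun d => γhb x d g * hhat d g h)]
    have A : ∑ b : Fin P, γhb x (Fin.castLE hP b) g * hhat (Fin.castLE hP b) g h
        = ∑ b : Fin P, γhb x (Fin.castLE hP b) g * h b :=
      Finset.sum_congr rfl fun b _ => by rw [hhat_indep]
    have B : ∑ d : Fin L, (if P ≤ (d:ℕ) then γhb x d g * hhat d g h else 0)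
        = ∑ b : Fin P, (∑ d : Fin L, (if P ≤ (d:ℕ) then γhb x d g * f d b g else 0)) * h b := by
      have step : ∀ d : Fin L, (if P ≤ (d:ℕ) then γhb x d g * hhat d g h else 0)
          = ∑ b : Fin P, (if P ≤ (d:ℕ) then γhb x d g * f d b g else 0) * h b := by
        intro d
        by_cases hd : P ≤ (d:ℕ)
        · simp only [if_pos hd, hhat_red d hd, Finset.mul_sum]
          exact Finset.sum_congr rfl fun b _ => by ring
        · simp [if_neg hd]
      rw [Finset.sum_congr rfl fun d _ => step d, Finset.sum_comm]
      exact Finset.sum_congr rfl fun b _ => by rw [Finset.sum_mul]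
    rw [A, B, ← Finset.sum_add_distrib]
    exact Finset.sum_congr rfl fun b _ => by rw [hcoef]; ring
  -- linearization of the consistency equation
  have hE : ∀ (a : Fin L), P ≤ (a:ℕ) → ∀ (g : ℝ) (h : Fin P → ℝ),
      βg g * deriv (fun t => hhat a t h) g
      + ∑ b : Fin P, γ (Fin.castLE hP b) g h
          * deriv (fun s => hhat a g (Function.update h b s)) (h b)
      - γ a g h
      = ∑ b : Fin P, (βg g * deriv (f a b) g
          + ∑ c : Fin P, f a c g * coef (Fin.castLE hP c) b g
          - coef a b g) * h b := by
    intro a ha g h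
    have d1 : deriv (fun t => hhat a t h) g = ∑ b : Fin P, deriv (f a b) g * h b := by
      have : (fun t => hhat a t h) = fun t => ∑ b : Fin P, f a b t * h b :=
        funext fun t => hhat_red a ha t h
      rw [this, deriv_lin' (fun b => f a b) (fun b => hf a b) h g]
    have d2 : ∀ b : Fin P, deriv (fun s => hhat a g (Function.update h b s)) (h b) = f a b g := by
      intro b
      have : (fun s => hhat a g (Function.update h b s))
          = fun s => ∑ e : Fin P, f a e g * Function.update h b s e :=
        funext fun s => hhat_red a ha g _
      rw [this, deriv_upd' (fun e => f a e g) h b]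
    have t2 : ∑ b : Fin P, γ (Fin.castLE hP b) g h
          * deriv (fun s => hhat a g (Function.update h b s)) (h b)
        = ∑ b : Fin P, (∑ c : Fin P, f a c g * coef (Fin.castLE hP c) b g) * h b := by
      have : ∑ b : Fin P, γ (Fin.castLE hP b) g h
            * deriv (fun s => hhat a g (Function.update h b s)) (h b)
          = ∑ c : Fin P, ∑ b : Fin P, f a c g * coef (Fin.castLE hP c) b g * h b := by
        refine Finset.sum_congr rfl fun c _ => ?_
        rw [d2 c, γexp (Fin.castLE hP c) g h, Finset.sum_mul]
        exact Finset.sum_congr rfl fun b _ => by ring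
      rw [this, Finset.sum_comm]
      exact Finset.sum_congr rfl fun b _ => by rw [Finset.sum_mul]
    rw [d1, t2, γexp a g h, Finset.mul_sum, ← Finset.sum_add_distrib, ← Finset.sum_sub_distrib]
    exact Finset.sum_congr rfl fun b _ => by ring
  constructor
  · intro H a ha b g
    have h0 := H a ha g (Pi.single b 1)
    have h1 : βg g * deriv (fun t => hhat a t (Pi.single b 1)) g
        + ∑ c : Fin P, γ (Fin.castLE hP c) g (Pi.single b 1)
            * deriv (fun s => hhat a g (Function.update (Pi.single b 1) c s)) ((Pi.single b 1 : Fin P → ℝ) c)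
        - γ a g (Pi.single b 1) = 0 := by rw [h0]; ring
    rw [hE a ha g (Pi.single b 1)] at h1
    have h2 : ∑ c : Fin P, (βg g * deriv (f a c) g
          + ∑ e : Fin P, f a e g * coef (Fin.castLE hP e) c g
          - coef a c g) * (Pi.single b 1 : Fin P → ℝ) c
        = βg g * deriv (f a b) g + ∑ e : Fin P, f a e g * coef (Fin.castLE hP e) b g - coef a b g := by
      rw [Finset.sum_eq_single b]
      · simp
      · intro c _ hc; simp [Pi.single_apply, hc]
      · intro hb; exact absurd (Finset.mem_univ b) hb
    rw [h2] at h1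
    simp only [hcoef] at h1
    linarith [h1]
  · intro H a ha g h
    have h1 := hE a ha g h
    have h2 : ∀ b : Fin P, βg g * deriv (f a b) g
        + ∑ c : Fin P, f a c g * coef (Fin.castLE hP c) b g
        - coef a b g = 0 := by
      intro b
      have := H a ha b g
      simp only [hcoef]
      linarith [this]
    have h3 : ∑ b : Fin P, (βg g * deriv (f a b) g
        + ∑ c : Fin P, f a c g * coef (Fin.castLE hP c) b g
        - coef a b g) * h b = 0 :=
      Finset.sum_eq_zero fun b _ => by rw [h2 b, zero_mul]
    rw [h3] at h1
    linarith [h1]
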